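/- Let B = (b_{ij}) be an n×n skew-symmetrizable integer matrix with b_{ij} ≥ 0 whenever i < j, let A be its Cartan companion, and let R_i be the simple reflections of A acting on the root lattice. For p ≥ 1 let k(p) := ⟨n − p + 1⟩ (so the sequence k(1), k(2), … is n, n−1, …, 1, n, n−1, …), and for p ≥ 0 set R'^{(p)} := R_{k(1)}∘⋯∘R_{k(p)}, the action of the length-p prefix of the infinite word s_n s_{n−1} ⋯ s_1 s_n ⋯ on the root lattice. Assume that for every p ≥ 1 all coordinates of R'^{(p−1)}(e_{k(p)}) are nonnegative. Define 2n×n integer matrices by N_0 := the block matrix with B on top of the n×n identity matrix and N_m := μ_{k(m)}(N_{m−1}) for m ≥ 1, and let C_m denote the bottom n×n submatrix of N_m. Then: (i) for 0 ≤ m ≤ n and 1 ≤ i ≤ n, the i-th column of C_m equals e_i if i ≤ n − m and −e_i if i > n − m; (ii) for m > n, the i-th column of C_m equals −R'^{(m−n)}(e_i) (i.e., the c-vector α_{i;t_{−m}} equals −c^{−∞}_{≤m−n} α_i); (iii) for m > n, every entry of the k(m)-th column of C_m is ≥ 0 and every entry of the k(m+1)-th column of C_m is ≤ 0. -/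
import Mathlib


open Finset

/-- The simple reflection `s_i` of the Weyl group of `A` acting on the root lattice
in the basis of simple roots: `R_i(e_j) = e_j - a_{ij} e_i`. -/
def Rmap {n : ℕ} (A : Matrix (Fin n) (Fin n) ℤ) (i : Fin n) (v : Fin n → ℤ) : Fin n → ℤ :=
  v - (∑ j, A i j * v j) • Pi.single i (1 : ℤ)

/-- `⟨m⟩ ∈ {1, …, n}` (0-indexed as an element of `Fin n`): the unique element of
`{1, …, n}` congruent to `m` modulo `n`. -/
def idx (n : ℕ) (hn : 0 < n) (m : ℤ) : Fin n :=
  ⟨((m - 1) % (n : ℤ)).toNat, by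
    have h0 : (0 : ℤ) < (n : ℤ) := Int.natCast_pos.mpr hn
    have h1 : 0 ≤ (m - 1) % (n : ℤ) := Int.emod_nonneg _ (ne_of_gt h0)
    have h2 : (m - 1) % (n : ℤ) < (n : ℤ) := Int.emod_lt_of_pos _ h0
    omega⟩

/-- `k(p) = ⟨n − p + 1⟩`, so that `k(1), k(2), …` is `n, n−1, …, 1, n, n−1, …`. -/
def kfun (n : ℕ) (hn : 0 < n) (p : ℕ) : Fin n :=
  idx n hn ((n : ℤ) - (p : ℤ) + 1)

/-- `B` is skew-symmetrizable: `DB` is skew-symmetric for some diagonal `D` with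
positive diagonal entries. -/
def IsSkewSymmetrizable {n : ℕ} (B : Matrix (Fin n) (Fin n) ℤ) : Prop :=
  ∃ d : Fin n → ℚ, (∀ i, 0 < d i) ∧ ∀ i j, d i * (B i j : ℚ) = -(d j * (B j i : ℚ))

/-- The Cartan companion of `B`: `a_{ii} = 2`, `a_{ij} = −|b_{ij}|` for `i ≠ j`. -/
def cartanCompanion {n : ℕ} (B : Matrix (Fin n) (Fin n) ℤ) : Matrix (Fin n) (Fin n) ℤ :=
  Matrix.of fun i j => if i = j then 2 else -|B i j|

/-- Matrix mutation `μ_k` of a `2n×n` exchange matrix (rows `Sum.inl` form the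
principal part; the row with the same index as column `k` is `Sum.inl k`). -/
def mutate {n : ℕ} (k : Fin n) (M : Matrix (Fin n ⊕ Fin n) (Fin n) ℤ) :
    Matrix (Fin n ⊕ Fin n) (Fin n) ℤ :=
  Matrix.of fun i j =>
    if i = Sum.inl k ∨ j = k then -M i j
    else M i j + max (M i k) 0 * max (M (Sum.inl k) j) 0
        - max (-M i k) 0 * max (-M (Sum.inl k) j) 0

/-- The initial exchange matrix with principal coefficients: `B` on top of the
identity matrix. -/
def initialM {n : ℕ} (B : Matrix (Fin n) (Fin n) ℤ) : Matrix (Fin n ⊕ Fin n) (Fin n) ℤ :=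
  Matrix.of fun i j => Sum.elim (fun r => B r j) (fun r => if r = j then 1 else 0) i

/-- `N_m`: iterated mutation of the principal-coefficients exchange matrix along the
sequence of directions `k(1), k(2), …` (i.e. `n, n−1, …, 1, n, n−1, …`). -/
def Nseq {n : ℕ} (hn : 0 < n) (B : Matrix (Fin n) (Fin n) ℤ) :
    ℕ → Matrix (Fin n ⊕ Fin n) (Fin n) ℤ
  | 0 => initialM B
  | m + 1 => mutate (kfun n hn (m + 1)) (Nseq hn B m)

/-- `R'^{(p)} = R_{k(1)}∘⋯∘R_{k(p)}`: the action of the length-`p` prefix of the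
infinite word `s_n s_{n−1} ⋯ s_1 s_n ⋯` on the root lattice. -/
def Rseq' {n : ℕ} (hn : 0 < n) (A : Matrix (Fin n) (Fin n) ℤ) (p : ℕ) (v : Fin n → ℤ) :
    Fin n → ℤ :=
  (List.range p).foldr (fun t w => Rmap A (kfun n hn (t + 1)) w) v

/-! Auxiliary lemmas -/

lemma kfun_val (n : ℕ) (hn : 0 < n) (m : ℕ) :
    ((kfun n hn (m+1)) : ℕ) = n - 1 - m % n := by
  unfold kfun idx
  simp only
  set q := m % n with hqdef
  have hq : q < n := Nat.mod_lt _ hn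
  obtain ⟨t, ht⟩ : ∃ t, m = n * t + q := ⟨m / n, (Nat.div_add_mod m n).symm⟩
  have h1 : ((n : ℤ) - (↑(m+1)) + 1 - 1) = ((n : ℤ) - 1 - (q:ℤ)) + (n:ℤ) * (-(t:ℤ)) := by
    rw [ht]; push_cast; ring
  rw [h1, Int.add_mul_emod_self_left, Int.emod_eq_of_lt (by omega) (by omega)]
  omega

lemma kfun_congr (n : ℕ) (hn : 0 < n) (a b : ℕ) (h : a % n = b % n) :
    kfun n hn (a+1) = kfun n hn (b+1) := by
  apply Fin.ext
  rw [kfun_val, kfun_val, h]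

lemma Rseq'_succ {n : ℕ} (hn : 0 < n) (A : Matrix (Fin n) (Fin n) ℤ) (p : ℕ) (v : Fin n → ℤ) :
    Rseq' hn A (p+1) v = Rseq' hn A p (Rmap A (kfun n hn (p+1)) v) := by
  unfold Rseq'
  rw [List.range_succ, List.foldr_append]
  rfl

lemma Rmap_single {n : ℕ} (A : Matrix (Fin n) (Fin n) ℤ) (k i : Fin n) :
    Rmap A k (Pi.single i 1) = Pi.single i 1 - A k i • Pi.single k (1:ℤ) := by
  unfold Rmap
  congr 2
  simp [Pi.single_apply, mul_ite]

lemma Rmap_sub_smul {n : ℕ} (A : Matrix (Fin n) (Fin n) ℤ) (k : Fin n)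
    (u w : Fin n → ℤ) (c : ℤ) :
    Rmap A k (u - c • w) = Rmap A k u - c • Rmap A k w := by
  funext r
  simp only [Rmap, Pi.sub_apply, Pi.smul_apply, smul_eq_mul]
  have h : ∑ j, A k j * (u j - c * w j)
      = (∑ j, A k j * u j) - c * ∑ j, A k j * w j := by
    rw [Finset.mul_sum, ← Finset.sum_sub_distrib]
    congr 1; funext j; ring
  rw [h]; ring

lemma Rseq'_zero_vec {n : ℕ} (hn : 0 < n) (A : Matrix (Fin n) (Fin n) ℤ) :
    ∀ p, Rseq' hn A p (0 : Fin n → ℤ) = 0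
  | 0 => rfl
  | p+1 => by
      rw [Rseq'_succ]
      have h : Rmap A (kfun n hn (p+1)) 0 = 0 := by
        funext r; simp [Rmap]
      rw [h, Rseq'_zero_vec hn A p]

lemma Rseq'_sub_smul {n : ℕ} (hn : 0 < n) (A : Matrix (Fin n) (Fin n) ℤ) :
    ∀ p (u w : Fin n → ℤ) (c : ℤ),
      Rseq' hn A p (u - c • w) = Rseq' hn A p u - c • Rseq' hn A p w
  | 0, u, w, c => rfl
  | p+1, u, w, c => by
      rw [Rseq'_succ, Rmap_sub_smul, Rseq'_sub_smul hn A p, Rseq'_succ, Rseq'_succ]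

lemma Rseq'_neg {n : ℕ} (hn : 0 < n) (A : Matrix (Fin n) (Fin n) ℤ) (p : ℕ) (v : Fin n → ℤ) :
    Rseq' hn A p (-v) = -Rseq' hn A p v := by
  have h := Rseq'_sub_smul hn A p 0 v 1
  simpa [Rseq'_zero_vec hn A p] using h

def Dsign (n m : ℕ) (i : Fin n) : ℤ := if n - m % n ≤ (i : ℕ) then -1 else 1

lemma Dsign_cases (n m : ℕ) (i : Fin n) : Dsign n m i = 1 ∨ Dsign n m i = -1 := by
  unfold Dsign; split
  · exact Or.inr rfl
  · exact Or.inl rfl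

lemma Dsign_eq (n m : ℕ) (hn : 0 < n) (i : Fin n) :
    Dsign n m i = if n - 1 - m % n < (i : ℕ) then -1 else 1 := by
  unfold Dsign
  have hq : m % n < n := Nat.mod_lt _ hn
  by_cases h : n - m % n ≤ (i : ℕ)
  · rw [if_pos h, if_pos (by omega)]
  · rw [if_neg h, if_neg (by omega)]

lemma succ_mod (m n : ℕ) (hn : 0 < n) :
    (m+1) % n = if m % n + 1 = n then 0 else m % n + 1 := by
  have hq : m % n < n := Nat.mod_lt _ hn
  rw [Nat.add_mod]
  rcases Nat.lt_or_ge 1 n with h1 | h1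
  · rw [Nat.mod_eq_of_lt h1]
    by_cases h : m % n + 1 = n
    · rw [if_pos h, h, Nat.mod_self]
    · rw [if_neg h, Nat.mod_eq_of_lt (by omega)]
  · have hn1 : n = 1 := by omega
    subst hn1
    simp [Nat.mod_one]

lemma main_inv (n : ℕ) (hn : 0 < n) (B : Matrix (Fin n) (Fin n) ℤ)
    (hskew : IsSkewSymmetrizable B)
    (hacyclic : ∀ i j : Fin n, i < j → 0 ≤ B i j)
    (hred : ∀ p : ℕ, 1 ≤ p → ∀ r : Fin n,
      0 ≤ Rseq' hn (cartanCompanion B) (p - 1) (Pi.single (kfun n hn p) (1 : ℤ)) r) :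
    ∀ m : ℕ,
      (∀ i j, Nseq hn B m (Sum.inl i) j = Dsign n m i * Dsign n m j * B i j)
      ∧ (m ≤ n → ∀ i r, Nseq hn B m (Sum.inr r) i =
          if (i : ℕ) + 1 ≤ n - m then (Pi.single i (1:ℤ) : Fin n → ℤ) r
          else -((Pi.single i (1:ℤ) : Fin n → ℤ) r))
      ∧ (n ≤ m → ∀ i r, Nseq hn B m (Sum.inr r) i =
          -(Rseq' hn (cartanCompanion B) (m - n) (Pi.single i (1:ℤ)) r)) := by
  obtain ⟨d, hdpos, hds⟩ := hskew
  have hBzero : ∀ i, B i i = 0 := by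
    intro i
    have h := hds i i
    have h2 := hdpos i
    have h3 : (B i i : ℚ) = 0 := by nlinarith
    exact_mod_cast h3
  have hBopp : ∀ i j : Fin n, 0 ≤ B i j → B j i ≤ 0 := by
    intro i j h
    have h1 := hds i j
    have h2 := hdpos i
    have h3 := hdpos j
    have h4 : (0 : ℚ) ≤ (B i j : ℚ) := by exact_mod_cast h
    have h5 : (B j i : ℚ) ≤ 0 := by nlinarith
    exact_mod_cast h5
  intro m
  induction m with
  | zero =>
    refine ⟨?_, ?_, ?_⟩
    · intro i j
      have hi := i.isLt
      have hj := j.isLt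
      show initialM B (Sum.inl i) j = _
      unfold Dsign
      rw [Nat.zero_mod, if_neg (by omega), if_neg (by omega)]
      simp [initialM]
    · intro _ i r
      have hi := i.isLt
      rw [if_pos (by omega)]
      show initialM B (Sum.inr r) i = _
      simp [initialM, Pi.single_apply]
    · intro h
      omega
  | succ m ih =>
    obtain ⟨ha, hc1, hc2⟩ := ih
    have hq : m % n < n := Nat.mod_lt _ hn
    have hk : ((kfun n hn (m+1)) : ℕ) = n - 1 - m % n := kfun_val n hn m
    set k := kfun n hn (m+1) with hkdef
    have hstep : Nseq hn B (m+1) = mutate k (Nseq hn B m) := rfl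
    have hDmk : Dsign n m k = 1 := by
      rw [Dsign_eq n m hn, if_neg (by omega)]
    have hDm : ∀ i : Fin n, Dsign n m i = if (k:ℕ) < (i:ℕ) then -1 else 1 := by
      intro i
      rw [Dsign_eq n m hn, hk]
    have hrow : ∀ j : Fin n, Nseq hn B m (Sum.inl k) j ≤ 0 := by
      intro j
      rw [ha k j, hDmk, one_mul, hDm j]
      rcases lt_trichotomy ((k : ℕ)) ((j : ℕ)) with h | h | h
      · rw [if_pos h]
        have hb : 0 ≤ B k j := hacyclic k j (Fin.lt_def.mpr h)
        linarith
      · have hjk : j = k := Fin.ext h.symm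
        rw [hjk, hBzero]
        simp
      · rw [if_neg (by omega)]
        have h0 : 0 ≤ B j k := hacyclic j k (Fin.lt_def.mpr h)
        have h1 := hBopp j k h0
        linarith
    have hcol : ∀ i : Fin n, 0 ≤ Nseq hn B m (Sum.inl i) k := by
      intro i
      rw [ha i k, hDmk, mul_one, hDm i]
      rcases lt_trichotomy ((k : ℕ)) ((i : ℕ)) with h | h | h
      · rw [if_pos h]
        have h0 : 0 ≤ B k i := hacyclic k i (Fin.lt_def.mpr h)
        have h1 := hBopp k i h0
        linarith
      · have hjk : i = k := Fin.ext h.symm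
        rw [hjk, hBzero]
        simp
      · rw [if_neg (by omega)]
        have h0 : 0 ≤ B i k := hacyclic i k (Fin.lt_def.mpr h)
        linarith
    have hrowA : ∀ j : Fin n, ¬ j = k → Nseq hn B m (Sum.inl k) j = cartanCompanion B k j := by
      intro j hj
      have h1 := hrow j
      have hne : ¬ k = j := fun h => hj h.symm
      rw [ha k j, hDmk, one_mul] at h1 ⊢
      have hC : cartanCompanion B k j = -|B k j| := by
        simp [cartanCompanion, if_neg hne]
      rw [hC]
      rcases Dsign_cases n m j with h | h <;> rw [h] at h1 ⊢
      · rw [one_mul] at h1 ⊢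
        rw [abs_of_nonpos h1]
        ring
      · rw [neg_one_mul] at h1 ⊢
        have h2 : 0 ≤ B k j := by linarith
        rw [abs_of_nonneg h2]
    -- the sign vector for m+1
    have hE : ∃ s : ℤ, (s = 1 ∨ s = -1) ∧
        ∀ i : Fin n, Dsign n (m+1) i = s * (if (k:ℕ) ≤ (i:ℕ) then -1 else 1) := by
      by_cases hc : m % n + 1 = n
      · refine ⟨-1, Or.inr rfl, fun i => ?_⟩
        unfold Dsign
        rw [succ_mod m n hn, if_pos hc, if_neg (by have := i.isLt; omega),
          if_pos (by omega)]
        norm_num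
      · refine ⟨1, Or.inl rfl, fun i => ?_⟩
        unfold Dsign
        rw [succ_mod m n hn, if_neg hc, one_mul]
        by_cases h : (k:ℕ) ≤ (i:ℕ)
        · rw [if_pos h, if_pos (by omega)]
        · rw [if_neg h, if_neg (by omega)]
    have hED : ∀ i : Fin n, (if (k:ℕ) ≤ (i:ℕ) then (-1:ℤ) else 1)
        = if i = k then -(Dsign n m i) else Dsign n m i := by
      intro i
      rw [hDm i]
      by_cases h1 : i = k
      · subst h1
        rw [if_pos (le_refl _), if_pos rfl, if_neg (lt_irrefl _)]
      · rw [if_neg h1]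
        have hne : (i:ℕ) ≠ (k:ℕ) := fun h => h1 (Fin.ext h)
        by_cases h2 : (k:ℕ) ≤ (i:ℕ)
        · rw [if_pos h2, if_pos (by omega)]
        · rw [if_neg h2, if_neg (by omega)]
    have hprod : ∀ i j : Fin n, Dsign n (m+1) i * Dsign n (m+1) j * B i j =
        (if i = k ∨ j = k then -(Dsign n m i * Dsign n m j * B i j)
         else Dsign n m i * Dsign n m j * B i j) := by
      intro i j
      obtain ⟨s, hs, hsE⟩ := hE
      rw [hsE i, hsE j, hED i, hED j]
      by_cases hik : i = k <;> by_cases hjk : j = k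
      · rw [if_pos hik, if_pos hjk, if_pos (Or.inl hik), hik, hjk, hBzero]
        ring
      · rcases hs with hs | hs <;> rw [hs, if_pos hik, if_neg hjk, if_pos (Or.inl hik)] <;> ring
      · rcases hs with hs | hs <;> rw [hs, if_neg hik, if_pos hjk, if_pos (Or.inr hjk)] <;> ring
      · rcases hs with hs | hs <;>
          rw [hs, if_neg hik, if_neg hjk, if_neg (by tauto)] <;> ring
    -- part (a)
    have hA : ∀ i j, Nseq hn B (m+1) (Sum.inl i) j
        = Dsign n (m+1) i * Dsign n (m+1) j * B i j := by
      intro i j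
      rw [hstep]
      simp only [mutate, Matrix.of_apply]
      by_cases hij : i = k ∨ j = k
      · rw [if_pos (hij.imp (fun h => by rw [h]) id)]
        rw [ha i j, hprod i j, if_pos hij]
      · rw [if_neg (by
            rintro (h | h)
            · exact hij (Or.inl (Sum.inl.inj h))
            · exact hij (Or.inr h))]
        have e1 : max (Nseq hn B m (Sum.inl k) j) 0 = 0 := max_eq_right (hrow j)
        have e2 : max (-Nseq hn B m (Sum.inl i) k) 0 = 0 :=
          max_eq_right (by linarith [hcol i])
        rw [e1, e2, mul_zero, zero_mul, add_zero, sub_zero, ha i j, hprod i j, if_neg hij]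
    -- part (c1)
    have hC1 : m + 1 ≤ n → ∀ i r, Nseq hn B (m+1) (Sum.inr r) i =
        if (i : ℕ) + 1 ≤ n - (m+1) then (Pi.single i (1:ℤ) : Fin n → ℤ) r
        else -((Pi.single i (1:ℤ) : Fin n → ℤ) r) := by
      intro hmn i r
      have hm : m < n := by omega
      have hqm : m % n = m := Nat.mod_eq_of_lt hm
      have hkv : (k:ℕ) = n - 1 - m := by rw [hk, hqm]
      have hcm := hc1 (by omega)
      have hcolC : ∀ r' : Fin n, 0 ≤ Nseq hn B m (Sum.inr r') k := by
        intro r'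
        rw [hcm k r', if_pos (by omega)]
        rw [Pi.single_apply]
        split
        · norm_num
        · exact le_refl 0
      rw [hstep]
      simp only [mutate, Matrix.of_apply]
      by_cases hik : i = k
      · rw [if_pos (Or.inr hik)]
        subst hik
        rw [hcm k r, if_pos (by omega), if_neg (by omega)]
      · rw [if_neg (by
            rintro (h | h)
            · exact Sum.inr_ne_inl h
            · exact hik h)]
        have e1 : max (Nseq hn B m (Sum.inl k) i) 0 = 0 := max_eq_right (hrow i)
        have e2 : max (-Nseq hn B m (Sum.inr r) k) 0 = 0 :=
          max_eq_right (by linarith [hcolC r])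
        rw [e1, e2, mul_zero, zero_mul, add_zero, sub_zero, hcm i r]
        have hne : (i:ℕ) ≠ (k:ℕ) := fun h => hik (Fin.ext h)
        by_cases h : (i:ℕ) + 1 ≤ n - (m+1)
        · rw [if_pos (by omega), if_pos h]
        · rw [if_neg (by omega), if_neg h]
    -- part (c2)
    have hC2 : n ≤ m + 1 → ∀ i r, Nseq hn B (m+1) (Sum.inr r) i =
        -(Rseq' hn (cartanCompanion B) (m + 1 - n) (Pi.single i (1:ℤ)) r) := by
      intro hnm i r
      rcases Nat.lt_or_ge m n with hmn | hmn
      · have hmn1 : m + 1 = n := by omega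
        rw [hC1 (by omega) i r, if_neg (by omega), show m + 1 - n = 0 from by omega]
        rfl
      · have hmod : (m - n) % n = m % n := by
          conv_rhs => rw [show m = n + (m - n) from by omega]
          rw [Nat.add_mod_left]
        have hkp : kfun n hn ((m - n) + 1) = k := kfun_congr n hn (m-n) m hmod
        have hcm := hc2 hmn
        have hcolC : ∀ r' : Fin n, Nseq hn B m (Sum.inr r') k ≤ 0 := by
          intro r'
          rw [hcm k r']
          have h0 := hred ((m-n)+1) (by omega) r'
          rw [Nat.add_sub_cancel, hkp] at h0
          linarith
        have hmm : m + 1 - n = (m - n) + 1 := by omega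
        have hRsucc : ∀ i : Fin n,
            Rseq' hn (cartanCompanion B) ((m-n)+1) (Pi.single i (1:ℤ))
            = Rseq' hn (cartanCompanion B) (m-n) (Pi.single i (1:ℤ))
              - (cartanCompanion B k i) • Rseq' hn (cartanCompanion B) (m-n)
                  (Pi.single k (1:ℤ)) := by
          intro i
          rw [Rseq'_succ, hkp, Rmap_single, Rseq'_sub_smul]
        rw [hstep]
        simp only [mutate, Matrix.of_apply]
        rw [hmm]
        by_cases hik : i = k
        · rw [if_pos (Or.inr hik)]
          subst hik
          rw [hcm k r, hRsucc k]
          have hAkk : cartanCompanion B k k = 2 := by simp [cartanCompanion]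
          rw [hAkk]
          simp only [Pi.sub_apply, Pi.smul_apply, smul_eq_mul]
          ring
        · rw [if_neg (by
              rintro (h | h)
              · exact Sum.inr_ne_inl h
              · exact hik h)]
          have e0 : max (Nseq hn B m (Sum.inr r) k) 0 = 0 := max_eq_right (hcolC r)
          have e1 : max (Nseq hn B m (Sum.inl k) i) 0 = 0 := max_eq_right (hrow i)
          have e2 : max (-Nseq hn B m (Sum.inr r) k) 0 = -Nseq hn B m (Sum.inr r) k :=
            max_eq_left (by linarith [hcolC r])
          have e3 : max (-Nseq hn B m (Sum.inl k) i) 0 = -Nseq hn B m (Sum.inl k) i :=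
            max_eq_left (by linarith [hrow i])
          rw [e0, e1, e2, e3, hrowA i hik, hcm i r, hcm k r, hRsucc i]
          simp only [Pi.sub_apply, Pi.smul_apply, smul_eq_mul]
          ring
    exact ⟨hA, hC1, hC2⟩


/-- The c-vectors along the path `t_0 — t_{-1} — t_{-2} — ⋯` in the acyclic belt:
for `m ≤ n` they are `±` the simple roots, for `m > n` one has
`α_{i;t_{−m}} = −c^{−∞}_{≤m−n} α_i`, and for `m > n` the c-vector `α_{k(m);t_{−m}}`
is a positive root while `α_{k(m+1);t_{−m}}` is a negative root. -/
theorem statement9 (n : ℕ) (hn : 0 < n) (B : Matrix (Fin n) (Fin n) ℤ)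
    (hskew : IsSkewSymmetrizable B)
    (hacyclic : ∀ i j : Fin n, i < j → 0 ≤ B i j)
    (hred : ∀ p : ℕ, 1 ≤ p → ∀ r : Fin n,
      0 ≤ Rseq' hn (cartanCompanion B) (p - 1) (Pi.single (kfun n hn p) (1 : ℤ)) r) :
    (∀ m : ℕ, m ≤ n → ∀ i : Fin n,
      (fun r => Nseq hn B m (Sum.inr r) i)
        = if (i : ℕ) + 1 ≤ n - m then Pi.single i (1 : ℤ) else -Pi.single i (1 : ℤ)) ∧
    (∀ m : ℕ, n < m → ∀ i r : Fin n,
      Nseq hn B m (Sum.inr r) i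
        = -(Rseq' hn (cartanCompanion B) (m - n) (Pi.single i (1 : ℤ)) r)) ∧
    (∀ m : ℕ, n < m → ∀ r : Fin n,
      0 ≤ Nseq hn B m (Sum.inr r) (kfun n hn m) ∧
      Nseq hn B m (Sum.inr r) (kfun n hn (m + 1)) ≤ 0) := by
  have H := main_inv n hn B hskew hacyclic hred
  refine ⟨?_, ?_, ?_⟩
  · intro m hm i
    funext r
    rw [(H m).2.1 hm i r]
    by_cases h : (i:ℕ) + 1 ≤ n - m
    · rw [if_pos h, if_pos h]
    · rw [if_neg h, if_neg h]; rfl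
  · intro m hm i r
    exact (H m).2.2 (le_of_lt hm) i r
  · intro m hm r
    constructor
    · rw [(H m).2.2 (le_of_lt hm) (kfun n hn m) r]
      obtain ⟨p', hp'⟩ : ∃ p', m - n = p' + 1 := ⟨m - n - 1, by omega⟩
      have hkm : kfun n hn m = kfun n hn (p' + 1) := by
        have h1 : m = (n + p') + 1 := by omega
        rw [h1]
        exact kfun_congr n hn (n + p') p' (Nat.add_mod_left n p')
      rw [hp', hkm]
      have hexp : Rseq' hn (cartanCompanion B) (p' + 1) (Pi.single (kfun n hn (p'+1)) (1:ℤ))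
          = -Rseq' hn (cartanCompanion B) p' (Pi.single (kfun n hn (p'+1)) (1:ℤ)) := by
        rw [Rseq'_succ, Rmap_single]
        have hAkk : cartanCompanion B (kfun n hn (p'+1)) (kfun n hn (p'+1)) = 2 := by
          simp [cartanCompanion]
        rw [hAkk]
        have h2 : (Pi.single (kfun n hn (p'+1)) (1:ℤ) : Fin n → ℤ)
              - (2:ℤ) • (Pi.single (kfun n hn (p'+1)) (1:ℤ) : Fin n → ℤ)
            = -((Pi.single (kfun n hn (p'+1)) (1:ℤ) : Fin n → ℤ)) := by
          funext x
          simp only [Pi.sub_apply, Pi.smul_apply, Pi.neg_apply, smul_eq_mul]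
          ring
        rw [h2, Rseq'_neg]
      rw [hexp]
      have h0 := hred (p'+1) (by omega) r
      rw [Nat.add_sub_cancel] at h0
      simp only [Pi.neg_apply, neg_neg]
      exact h0
    · rw [(H m).2.2 (le_of_lt hm) (kfun n hn (m+1)) r]
      have hkm : kfun n hn (m+1) = kfun n hn ((m - n) + 1) := by
        refine kfun_congr n hn m (m - n) ?_
        conv_lhs => rw [show m = n + (m - n) from by omega]
        rw [Nat.add_mod_left]
      rw [hkm]
      have h0 := hred ((m - n) + 1) (by omega) r
      rw [Nat.add_sub_cancel] at h0
      linarith
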